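/- arXiv:0708.2113 — 6 statements merged into one kernel-verified Lean document; each statement's English description precedes it below -/
import Mathlib

section
/- A bipartite state ρ₀ on C^d ⊗ C^d is faithful (i.e., Λ ↦ (I ⊗ Λ)(ρ₀) is injective on linear maps over d×d matrices) if and only if the operator ρ̌₀ = (E ρ₀)^{T_B} E is invertible, where E is the swap operator. -/
open Matrix Finset
open scoped ComplexOrder

noncomputable section

/-- Kronecker (tensor) product of two `d × d` complex matrices. -/
def kron {d : ℕ} (A B : Matrix (Fin d) (Fin d) ℂ) :
    Matrix (Fin d × Fin d) (Fin d × Fin d) ℂ :=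
  Matrix.kroneckerMap (· * ·) A B

/-- The action of `I ⊗ Λ` on a bipartite operator. -/
def applyRight {d : ℕ} (Λ : Matrix (Fin d) (Fin d) ℂ →ₗ[ℂ] Matrix (Fin d) (Fin d) ℂ)
    (ρ : Matrix (Fin d × Fin d) (Fin d × Fin d) ℂ) :
    Matrix (Fin d × Fin d) (Fin d × Fin d) ℂ :=
  fun p q => ∑ r : Fin d, ∑ s : Fin d,
    ρ (p.1, r) (q.1, s) * Λ (Matrix.single r s 1) p.2 q.2

/-- The outer product `|x⟩⟨x|`. -/
def outer {ι : Type*} (x : ι → ℂ) : Matrix ι ι ℂ :=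
  Matrix.vecMulVec x (star x)

/-- The swap operator `E = ∑ |ij⟩⟨ji|`. -/
def swapOp {d : ℕ} : Matrix (Fin d × Fin d) (Fin d × Fin d) ℂ :=
  fun p q => if p.1 = q.2 ∧ p.2 = q.1 then 1 else 0

/-- Partial transpose with respect to the second tensor factor. -/
def ptransB {d : ℕ} (ρ : Matrix (Fin d × Fin d) (Fin d × Fin d) ℂ) :
    Matrix (Fin d × Fin d) (Fin d × Fin d) ℂ :=
  fun p q => ρ (p.1, q.2) (q.1, p.2)

/-- `ρ̌ = (E ρ)^{T_B} E`. -/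
def check {d : ℕ} (ρ : Matrix (Fin d × Fin d) (Fin d × Fin d) ℂ) :
    Matrix (Fin d × Fin d) (Fin d × Fin d) ℂ :=
  ptransB (swapOp * ρ) * swapOp

/-- A bipartite state is faithful if `Λ ↦ (I ⊗ Λ)(ρ)` is injective. -/
def Faithful {d : ℕ} (ρ : Matrix (Fin d × Fin d) (Fin d × Fin d) ℂ) : Prop :=
  Function.Injective (fun Λ : Matrix (Fin d) (Fin d) ℂ →ₗ[ℂ] Matrix (Fin d) (Fin d) ℂ =>
    applyRight Λ ρ)

/-- A positive map: sends PSD matrices to PSD matrices. -/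
def PosMap {d : ℕ} (Λ : Matrix (Fin d) (Fin d) ℂ →ₗ[ℂ] Matrix (Fin d) (Fin d) ℂ) : Prop :=
  ∀ X : Matrix (Fin d) (Fin d) ℂ, X.PosSemidef → (Λ X).PosSemidef

/-- The cone `K⁺(ρ₀)` of operators `(I ⊗ Λ)(ρ₀)` with `Λ` a positive map. -/
def Kplus {d : ℕ} (ρ₀ : Matrix (Fin d × Fin d) (Fin d × Fin d) ℂ) :
    Set (Matrix (Fin d × Fin d) (Fin d × Fin d) ℂ) :=
  {σ | ∃ Λ, PosMap Λ ∧ σ = applyRight Λ ρ₀}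

/-- The maximally entangled vector `|ψ⁺⟩ = (1/√d) ∑ᵢ |ii⟩`. -/
def psiPlus {d : ℕ} : Fin d × Fin d → ℂ :=
  fun p => if p.1 = p.2 then ((1 / Real.sqrt d : ℝ) : ℂ) else 0

/-- The maximally entangled state `|ψ⁺⟩⟨ψ⁺|`. -/
def psiProj {d : ℕ} : Matrix (Fin d × Fin d) (Fin d × Fin d) ℂ :=
  outer psiPlus

/-!
Writing `realign ρ` for the matrix with entries `ρ((m,r),(n,s))` indexed by `((m,n),(r,s))`,
the action of `I ⊗ Λ` becomes a matrix product: `(I ⊗ Λ)(ρ) = realign (realign ρ * L)`, where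
`L` is the (transposed) matrix of `Λ` in the standard basis of matrix units. As `Λ ↦ L` is a
bijection, `ρ` is faithful iff `realign ρ` is left-cancellable, i.e. invertible; and reshuffling
the definition of `ρ̌` shows `ρ̌ = (realign ρ)ᵀ`.
-/

namespace Matrix

variable {R m n m' n' : Type*}

def realign (ρ : Matrix (m × n) (m' × n') R) : Matrix (m × m') (n × n') R :=
  of fun p q => ρ (p.1, q.1) (p.2, q.2)

@[simp]
theorem realign_apply (ρ : Matrix (m × n) (m' × n') R) (p : m × m') (q : n × n') :
    realign ρ p q = ρ (p.1, q.1) (p.2, q.2) :=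
  rfl

@[simp]
theorem realign_realign (ρ : Matrix (m × n) (m' × n') R) : realign (realign ρ) = ρ :=
  rfl

theorem realign_injective : Function.Injective (realign : Matrix (m × n) (m' × n') R → _) :=
  Function.LeftInverse.injective realign_realign

end Matrix

theorem check_eq_transpose_realign {d : ℕ} (ρ : Matrix (Fin d × Fin d) (Fin d × Fin d) ℂ) :
    check ρ = (realign ρ)ᵀ := by
  ext p q
  simp [check, ptransB, swapOp, mul_apply, Fintype.sum_prod_type, ite_and]

theorem applyRight_eq_realign_mul {d : ℕ}
    (Λ : Matrix (Fin d) (Fin d) ℂ →ₗ[ℂ] Matrix (Fin d) (Fin d) ℂ)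
    (ρ : Matrix (Fin d × Fin d) (Fin d × Fin d) ℂ) :
    applyRight Λ ρ = realign (realign ρ *
      (LinearMap.toMatrix (stdBasis ℂ (Fin d) (Fin d)) (stdBasis ℂ (Fin d) (Fin d)) Λ)ᵀ) := by
  ext p q
  simp only [applyRight, realign_apply, transpose_apply, mul_apply, Fintype.sum_prod_type,
    LinearMap.toMatrix_apply, stdBasis_eq_single]
  rfl

theorem faithful_iff_isLeftRegular_realign {d : ℕ}
    (ρ : Matrix (Fin d × Fin d) (Fin d × Fin d) ℂ) :
    Faithful ρ ↔ IsLeftRegular (realign ρ) := by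
  rw [Faithful, funext fun Λ => applyRight_eq_realign_mul Λ ρ]
  refine (realign_injective.of_comp_iff _).trans (Function.Injective.of_comp_iff' _ ?_)
  exact (transposeLinearEquiv _ _ ℂ ℂ).bijective.comp (LinearMap.toMatrix _ _).bijective

theorem faithful_iff_check_invertible_general {d : ℕ}
    (ρ₀ : Matrix (Fin d × Fin d) (Fin d × Fin d) ℂ) :
    Faithful ρ₀ ↔ IsUnit (check ρ₀) := by
  rw [faithful_iff_isLeftRegular_realign, check_eq_transpose_realign, isUnit_transpose,
    IsArtinianRing.isUnit_iff_isLeftRegular]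

/-- D'Ariano–Lo Presti faithfulness criterion. -/
theorem faithful_iff_check_invertible {d : ℕ}
    (ρ₀ : Matrix (Fin d × Fin d) (Fin d × Fin d) ℂ)
    (hpsd : ρ₀.PosSemidef) (htr : ρ₀.trace = 1) :
    Faithful ρ₀ ↔ IsUnit (check ρ₀) :=
  faithful_iff_check_invertible_general ρ₀
end
end

section
/- Conversely, if Z is a Hermitian operator on C^d ⊗ C^d with ⟨x,y|Z|x,y⟩ ≥ 0 for all product vectors, then the unique linear map Λ with Z = (I ⊗ Λ)(|ψ⁺⟩⟨ψ⁺|) is a positive map, and it is given explicitly by Λ(ρ) = Σ_{ijkl} ⟨ij|Z|kl⟩ ⟨i|ρ|k⟩ |j⟩⟨l| (up to a factor d). -/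
/-!
The map `Λ ρ = d ∑ ⟨ij|Z|kl⟩ ⟨i|ρ|k⟩ |j⟩⟨l|` is the inverse of the Choi–Jamiołkowski
correspondence: `(I ⊗ Λ)(|ψ⁺⟩⟨ψ⁺|)` has entries `Λ(|i⟩⟨k|)_{jl} / d`, so it recovers `Z`, and
`Λ` is determined by its values on the matrix units. For positivity, write a positive
semidefinite `X` as `Bᴴ B = ∑ᵣ |B̄ᵣ⟩⟨B̄ᵣ|`; the quadratic form of `Λ(|x̄⟩⟨x̄|)` at `y` is
`d ⟨x ⊗ y|Z|x ⊗ y⟩ ≥ 0`.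
-/

open Matrix Finset
open scoped ComplexOrder

noncomputable section

/-- The product vector `|x⟩ ⊗ |y⟩`. -/
def tensorVec {d : ℕ} (x y : Fin d → ℂ) : Fin d × Fin d → ℂ :=
  fun p => x p.1 * y p.2

lemma conjTranspose_mul_self_eq_sum_vecMulVec {k m : Type*} [Fintype k] (B : Matrix k m ℂ) :
    Bᴴ * B = ∑ r, vecMulVec (star (B r)) (B r) := by
  ext i j
  simp [mul_apply, vecMulVec_apply, Matrix.sum_apply]

section MapOfChoi

variable {m n : Type*} [Fintype m]

def BlockPositive [Fintype n] (Z : Matrix (m × n) (m × n) ℂ) : Prop :=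
  ∀ (x : m → ℂ) (y : n → ℂ),
    0 ≤ star (fun p : m × n => x p.1 * y p.2) ⬝ᵥ (Z *ᵥ fun p => x p.1 * y p.2)

/-- `ρ ↦ Tr₁ ((ρᵀ ⊗ 1) Z)`, the map whose Choi matrix is `Z` (for the unnormalised `∑ᵢ |ii⟩`). -/
def mapOfChoi (Z : Matrix (m × n) (m × n) ℂ) : Matrix m m ℂ →ₗ[ℂ] Matrix n n ℂ where
  toFun ρ := Matrix.of fun j l => ∑ i, ∑ k, Z (i, j) (k, l) * ρ i k
  map_add' ρ σ := by ext; simp [mul_add, Finset.sum_add_distrib]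
  map_smul' c ρ := by ext; simp [Finset.mul_sum, mul_left_comm]

@[simp]
lemma mapOfChoi_apply (Z : Matrix (m × n) (m × n) ℂ) (ρ : Matrix m m ℂ) (j l : n) :
    mapOfChoi Z ρ j l = ∑ i, ∑ k, Z (i, j) (k, l) * ρ i k :=
  rfl

lemma mapOfChoi_single [DecidableEq m] (Z : Matrix (m × n) (m × n) ℂ) (r s : m) (j l : n) :
    mapOfChoi Z (single r s 1) j l = Z (r, j) (s, l) := by
  simp [single_apply, ite_and, Finset.sum_ite_irrel]

theorem Matrix.IsHermitian.mapOfChoi {Z : Matrix (m × n) (m × n) ℂ} {ρ : Matrix m m ℂ}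
    (hZ : Z.IsHermitian) (hρ : ρ.IsHermitian) : (mapOfChoi Z ρ).IsHermitian := by
  ext j l
  simp only [conjTranspose_apply, mapOfChoi_apply, star_sum, star_mul']
  rw [Finset.sum_comm]
  refine Finset.sum_congr rfl fun i _ => Finset.sum_congr rfl fun k _ => ?_
  rw [← conjTranspose_apply, hZ.eq, ← conjTranspose_apply, hρ.eq]

lemma dotProduct_mapOfChoi_vecMulVec [Fintype n] (Z : Matrix (m × n) (m × n) ℂ) (x : m → ℂ)
    (y : n → ℂ) :
    star y ⬝ᵥ (mapOfChoi Z (vecMulVec (star x) x) *ᵥ y)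
      = star (fun p : m × n => x p.1 * y p.2) ⬝ᵥ (Z *ᵥ fun p => x p.1 * y p.2) := by
  simp only [dotProduct, mulVec, mapOfChoi_apply, vecMulVec_apply, Pi.star_apply, star_mul',
    Fintype.sum_prod_type, Finset.mul_sum, Finset.sum_mul]
  refine (Finset.sum_congr rfl fun j _ => Finset.sum_comm).trans ?_
  rw [Finset.sum_comm]
  refine Finset.sum_congr rfl fun i _ => Finset.sum_congr rfl fun j _ => ?_
  rw [Finset.sum_comm]
  exact Finset.sum_congr rfl fun k _ => Finset.sum_congr rfl fun l _ => by ring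

theorem Matrix.PosSemidef.mapOfChoi [Fintype n] {Z : Matrix (m × n) (m × n) ℂ} {X : Matrix m m ℂ}
    (hZ : Z.IsHermitian) (hZb : BlockPositive Z) (hX : X.PosSemidef) :
    (mapOfChoi Z X).PosSemidef := by
  classical
  obtain ⟨B, rfl⟩ : ∃ B : Matrix m m ℂ, X = Bᴴ * B := by
    open scoped MatrixOrder in exact CStarAlgebra.nonneg_iff_eq_star_mul_self.mp hX.nonneg
  refine .of_dotProduct_mulVec_nonneg (hZ.mapOfChoi hX.1) fun y => ?_
  rw [conjTranspose_mul_self_eq_sum_vecMulVec, map_sum, Matrix.sum_mulVec, dotProduct_sum]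
  exact Finset.sum_nonneg fun r _ => dotProduct_mapOfChoi_vecMulVec Z (B r) y ▸ hZb (B r) y

end MapOfChoi

lemma psiProj_apply {d : ℕ} (p q : Fin d × Fin d) :
    psiProj p q = if p.1 = p.2 ∧ q.1 = q.2 then (d : ℂ)⁻¹ else 0 := by
  have hsq : ((1 / Real.sqrt d : ℝ) : ℂ) * ((1 / Real.sqrt d : ℝ) : ℂ) = (d : ℂ)⁻¹ := by
    rw [← Complex.ofReal_mul, div_mul_div_comm, one_mul, Real.mul_self_sqrt d.cast_nonneg]
    push_cast; ring
  simp only [psiProj, outer, psiPlus, vecMulVec_apply, Pi.star_apply]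
  split_ifs <;> simp_all [Complex.conj_ofReal]

lemma applyRight_psiProj_apply {d : ℕ}
    (Λ : Matrix (Fin d) (Fin d) ℂ →ₗ[ℂ] Matrix (Fin d) (Fin d) ℂ) (p q : Fin d × Fin d) :
    applyRight Λ psiProj p q = (d : ℂ)⁻¹ * Λ (single p.1 q.1 1) p.2 q.2 := by
  simp [applyRight, psiProj_apply, ite_and]

lemma faithful_psiProj {d : ℕ} (hd : d ≠ 0) : Faithful (psiProj (d := d)) := by
  intro Λ Λ' h
  refine Matrix.ext_linearMap ℂ fun r s => LinearMap.ext_ring <| Matrix.ext fun j l => ?_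
  have := congrFun (congrFun h (r, j)) (s, l)
  simp only [applyRight_psiProj_apply] at this
  simpa [hd] using this

lemma applyRight_psiProj_smul_mapOfChoi {d : ℕ} (hd : d ≠ 0)
    (Z : Matrix (Fin d × Fin d) (Fin d × Fin d) ℂ) :
    applyRight ((d : ℂ) • mapOfChoi Z) psiProj = Z := by
  ext p q
  simp only [applyRight_psiProj_apply, LinearMap.smul_apply, Matrix.smul_apply, mapOfChoi_single,
    smul_eq_mul]
  field_simp

/-- a block-positive Hermitian operator is the Choi matrix of a unique
linear map, which is positive and given by the explicit formula
`Λ(ρ) = d ∑ ⟨ij|Z|kl⟩ ⟨i|ρ|k⟩ |j⟩⟨l|`. -/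
theorem posMap_of_blockPositive {d : ℕ} (hd : 0 < d)
    (Z : Matrix (Fin d × Fin d) (Fin d × Fin d) ℂ)
    (hherm : Z.IsHermitian)
    (hblock : ∀ x y : Fin d → ℂ,
      0 ≤ star (tensorVec x y) ⬝ᵥ (Z *ᵥ tensorVec x y)) :
    ∃ Λ : Matrix (Fin d) (Fin d) ℂ →ₗ[ℂ] Matrix (Fin d) (Fin d) ℂ,
      applyRight Λ (psiProj (d := d)) = Z ∧
      PosMap Λ ∧
      (∀ (ρ : Matrix (Fin d) (Fin d) ℂ) (j l : Fin d),
        Λ ρ j l = (d : ℂ) * ∑ i : Fin d, ∑ k : Fin d, Z (i, j) (k, l) * ρ i k) ∧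
      (∀ Λ' : Matrix (Fin d) (Fin d) ℂ →ₗ[ℂ] Matrix (Fin d) (Fin d) ℂ,
        applyRight Λ' (psiProj (d := d)) = Z → Λ' = Λ) := by
  have hChoi := applyRight_psiProj_smul_mapOfChoi hd.ne' Z
  refine ⟨(d : ℂ) • mapOfChoi Z, hChoi, fun X hX => ?_, fun ρ j l => rfl,
    fun Λ' hΛ' => faithful_psiProj hd.ne' (hΛ'.trans hChoi.symm)⟩
  exact (PosSemidef.mapOfChoi hherm hblock hX).smul (Nat.cast_nonneg (α := ℂ) d)
end
end

section
/- The isotropic state ρ(λ) = (1−λ) I_{AB} + λ |ψ⁺⟩⟨ψ⁺| with λ = 1/(d+1) admits the explicit separable decomposition ρ₀ = (d/(d+1))·(1/4^d) Σ_z ρ_z + (1/(d(d+1))) Σ_{j=1}^d |j⟩⟨j| ⊗ |j⟩⟨j|, where ρ_z = |Φ_z⟩⟨Φ_z| ⊗ |Φ_{z*}⟩⟨Φ_{z*}| and the sum runs over all vectors z ∈ {±1, ±i}^d. -/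
open Matrix Finset
open scoped ComplexOrder

noncomputable section

/-- The maximally mixed state `(1/d²)·Id` on `C^d ⊗ C^d`. -/
def maxMixed {d : ℕ} : Matrix (Fin d × Fin d) (Fin d × Fin d) ℂ :=
  ((1 / (d : ℝ) ^ 2 : ℝ) : ℂ) • (1 : Matrix (Fin d × Fin d) (Fin d × Fin d) ℂ)

/-- The vector `|Φ_z⟩ = (1/√d) ∑ⱼ zⱼ |j⟩`, where `zⱼ = i^(z j)` ranges over `{1, i, -1, -i}`. -/
def phiVec {d : ℕ} (z : Fin d → Fin 4) : Fin d → ℂ :=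
  fun j => ((1 / Real.sqrt d : ℝ) : ℂ) * Complex.I ^ (z j : ℕ)

/-- The product state `ρ_z = |Φ_z⟩⟨Φ_z| ⊗ |Φ_{z*}⟩⟨Φ_{z*}|`. -/
def rhoZ {d : ℕ} (z : Fin d → Fin 4) : Matrix (Fin d × Fin d) (Fin d × Fin d) ℂ :=
  kron (outer (phiVec z)) (outer (star ∘ phiVec z))

/-- The standard basis vector `|j⟩`. -/
def basisVec {d : ℕ} (j : Fin d) : Fin d → ℂ :=
  fun i => if i = j then 1 else 0

/-! Entrywise, with `u j = i ^ z j`, the entry of `ρ_z` at `((a,b),(c,e))` is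
`u a * u e * conj (u b) * conj (u c) / d²`, the character of `(ℤ/4)^d` with exponent vector
`e_a + e_e - e_b - e_c`. Averaging over `z` kills every nontrivial character, and this vector is
`0 mod 4` exactly when `{a, e} = {b, c}`, i.e. when `a = b ∧ c = e` or `a = c ∧ b = e`. At
`λ = 1/(d+1)` the isotropic state is `(Id + d |ψ⁺⟩⟨ψ⁺|) / (d(d+1))`, whose entries are the *sum* of
the two indicators; the averaged product states contribute their disjunction, and the diagonal
term `∑ⱼ |jj⟩⟨jj|` supplies the missing conjunction. -/

theorem Finset.prod_zpow_eq_zpow_sum₀ {ι G₀ : Type*} [CommGroupWithZero G₀] {a : G₀} (ha : a ≠ 0)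
    (s : Finset ι) (f : ι → ℤ) : ∏ i ∈ s, a ^ f i = a ^ ∑ i ∈ s, f i := by
  induction s using Finset.cons_induction with
  | empty => simp
  | cons i s hi ih => rw [prod_cons, sum_cons, ih, zpow_add₀ ha]

namespace IsPrimitiveRoot

variable {K : Type*} [Field K] {ζ : K} {n : ℕ}

theorem sum_fin_zpow_pow_eq_ite (hζ : IsPrimitiveRoot ζ n) (m : ℤ) :
    ∑ k : Fin n, (ζ ^ m) ^ (k : ℕ) = if (n : ℤ) ∣ m then (n : K) else 0 := by
  rw [Fin.sum_univ_eq_sum_range (fun k => (ζ ^ m) ^ k)]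
  split_ifs with h
  · simp [(hζ.zpow_eq_one_iff_dvd m).2 h]
  · have hm : (ζ ^ m) ^ n = 1 := by
      rw [← zpow_natCast, ← _root_.zpow_mul, mul_comm, _root_.zpow_mul, hζ.zpow_eq_one,
        _root_.one_zpow]
    rw [geom_sum_eq (mt (hζ.zpow_eq_one_iff_dvd m).1 h), hm, sub_self, zero_div]

theorem sum_zpow_sum_mul_eq_ite {ι : Type*} [Fintype ι] [DecidableEq ι] [NeZero n] (hζ : IsPrimitiveRoot ζ n)
    (m : ι → ℤ) :
    ∑ z : ι → Fin n, ζ ^ (∑ j, m j * (z j : ℤ))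
      = if ∀ j, (n : ℤ) ∣ m j then (n : K) ^ Fintype.card ι else 0 := by
  have hprod (z : ι → Fin n) : ζ ^ (∑ j, m j * (z j : ℤ)) = ∏ j, (ζ ^ m j) ^ (z j : ℕ) := by
    rw [← prod_zpow_eq_zpow_sum₀ (hζ.ne_zero (NeZero.ne n))]
    exact prod_congr rfl fun j _ => by rw [_root_.zpow_mul, zpow_natCast]
  simp_rw [hprod]
  rw [← Fintype.prod_sum fun j (k : Fin n) => (ζ ^ m j) ^ (k : ℕ)]
  simp_rw [hζ.sum_fin_zpow_pow_eq_ite, Fintype.prod_ite_zero, prod_const, card_univ]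

end IsPrimitiveRoot

theorem four_dvd_single_add_single_sub_iff {ι : Type*} [DecidableEq ι] (a b c e : ι) :
    (∀ j, (4 : ℤ) ∣ (Finsupp.single a 1 + Finsupp.single e 1 - Finsupp.single b 1
        - Finsupp.single c 1 : ι →₀ ℤ) j) ↔ (a = b ∧ c = e) ∨ (a = c ∧ b = e) := by
  set m : ι →₀ ℤ := Finsupp.single a 1 + Finsupp.single e 1 - Finsupp.single b 1
    - Finsupp.single c 1 with hm
  -- every coordinate of `m` lies in `[-2, 2]`
  have hsmall (j : ι) : (4 : ℤ) ∣ m j ↔ m j = 0 := by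
    simp only [hm, Finsupp.coe_sub, Finsupp.coe_add, Pi.sub_apply, Pi.add_apply,
      Finsupp.single_apply]
    split_ifs <;> omega
  have hzero : (∀ j, m j = 0) ↔ m = 0 := by simp [Finsupp.ext_iff]
  simp_rw [hsmall, hzero, hm, sub_sub, sub_eq_zero,
    Finsupp.single_add_single_eq_single_add_single one_ne_zero one_ne_zero]
  grind

open Complex

theorem sum_I_zpow_eq_ite {ι : Type*} [Fintype ι] [DecidableEq ι] (a b c e : ι) :
    ∑ z : ι → Fin 4, I ^ ((z a : ℤ) + z e - z b - z c)
      = if (a = b ∧ c = e) ∨ (a = c ∧ b = e) then 4 ^ Fintype.card ι else 0 := by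
  have hexp (z : ι → Fin 4) : (z a : ℤ) + z e - z b - z c
      = ∑ j, (Finsupp.single a 1 + Finsupp.single e 1 - Finsupp.single b 1
        - Finsupp.single c 1 : ι →₀ ℤ) j * (z j : ℤ) := by
    simp [Finsupp.single_apply, add_mul, sub_mul, sum_add_distrib, sum_sub_distrib]
  rw [sum_congr rfl fun z _ => congrArg (I ^ ·) (hexp z), isPrimitiveRoot_I.sum_zpow_sum_mul_eq_ite]
  simp_rw [Nat.cast_ofNat, four_dvd_single_add_single_sub_iff]

theorem ofReal_one_div_sqrt_sq {x : ℝ} (hx : 0 ≤ x) : ((1 / √x : ℝ) : ℂ) ^ 2 = 1 / x := by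
  rw [← ofReal_pow, div_pow, one_pow, Real.sq_sqrt hx, ofReal_div, ofReal_one]

section Entries

variable {d : ℕ} (a b c e : Fin d)

theorem maxMixed_apply : maxMixed (a, b) (c, e) = if a = c ∧ b = e then 1 / (d : ℂ) ^ 2 else 0 := by
  simp [maxMixed, one_apply]

theorem psiProj_apply_s11 : psiProj (a, b) (c, e) = if a = b ∧ c = e then 1 / (d : ℂ) else 0 := by
  simp only [psiProj, outer, vecMulVec_apply, psiPlus, Pi.star_apply, star_def]
  rw [apply_ite (starRingEnd ℂ), conj_ofReal, map_zero, ite_zero_mul_ite_zero, ← sq,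
    ofReal_one_div_sqrt_sq d.cast_nonneg, ofReal_natCast]

theorem rhoZ_apply (z : Fin d → Fin 4) :
    rhoZ z (a, b) (c, e) = 1 / (d : ℂ) ^ 2 * I ^ ((z a : ℤ) + z e - z b - z c) := by
  have hnorm : ((1 / √d : ℝ) : ℂ) ^ 4 = 1 / (d : ℂ) ^ 2 := by
    rw [show 4 = 2 * 2 from rfl, pow_mul, ofReal_one_div_sqrt_sq d.cast_nonneg, ofReal_natCast,
      _root_.one_div_pow]
  have hphase : I ^ ((z a : ℤ) + z e - z b - z c)
      = I ^ (z a : ℕ) * I ^ (z e : ℕ) * (-I) ^ (z b : ℕ) * (-I) ^ (z c : ℕ) := by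
    simp [zpow_sub₀ I_ne_zero, zpow_add₀ I_ne_zero, div_eq_mul_inv, ← inv_pow, inv_I]
  rw [hphase, ← hnorm]
  simp only [rhoZ, kron, kroneckerMap_apply, outer, vecMulVec_apply, Pi.star_apply,
    Function.comp_apply, phiVec, star_def, map_mul, map_pow, map_neg, conj_ofReal, conj_I]
  ring

theorem sum_rhoZ_apply : (∑ z, rhoZ z) (a, b) (c, e)
    = if (a = b ∧ c = e) ∨ (a = c ∧ b = e) then 4 ^ d / (d : ℂ) ^ 2 else 0 := by
  simp_rw [Matrix.sum_apply, rhoZ_apply, ← mul_sum, sum_I_zpow_eq_ite, Fintype.card_fin, mul_ite,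
    mul_zero, one_div_mul_eq_div]

theorem sum_kron_basisVec_apply :
    (∑ j, kron (outer (basisVec j)) (outer (basisVec j))) (a, b) (c, e)
      = if a = b ∧ a = c ∧ a = e then 1 else 0 := by
  simp only [Matrix.sum_apply, kron, kroneckerMap_apply, outer, vecMulVec_apply, Pi.star_apply,
    basisVec]
  rw [sum_eq_single a (fun j _ hj => by simp [Ne.symm hj]) (by simp)]
  simp only [apply_ite star, star_one, star_zero, one_mul, ite_zero_mul_ite_zero]
  grind

end Entries

theorem ite_add_ite_eq_ite_or_add_ite_and {M : Type*} [AddZeroClass M] (p q : Prop)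
    [Decidable p] [Decidable q] (x : M) :
    (if p then x else 0) + (if q then x else 0)
      = (if p ∨ q then x else 0) + (if p ∧ q then x else 0) := by
  by_cases hp : p <;> by_cases hq : q <;> simp [hp, hq]

theorem isotropic_explicit_decomposition_general {d : ℕ} :
    ((1 - 1 / ((d : ℝ) + 1) : ℝ) : ℂ) • maxMixed (d := d)
      + ((1 / ((d : ℝ) + 1) : ℝ) : ℂ) • psiProj (d := d)
    = (((d : ℝ) / ((d : ℝ) + 1) * (1 / 4 ^ d) : ℝ) : ℂ) • ∑ z : Fin d → Fin 4, rhoZ z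
      + ((1 / ((d : ℝ) * ((d : ℝ) + 1)) : ℝ) : ℂ) •
          ∑ j : Fin d, kron (outer (basisVec j)) (outer (basisVec j)) := by
  ext ⟨a, b⟩ ⟨c, e⟩
  have hd : (d : ℂ) ≠ 0 := Nat.cast_ne_zero.2 a.pos.ne'
  have hd1 : (d : ℂ) + 1 ≠ 0 := by exact_mod_cast d.succ_ne_zero
  have hmixed : (1 - 1 / ((d : ℂ) + 1)) * (1 / (d : ℂ) ^ 2) = 1 / (d * (d + 1)) := by
    field_simp; ring
  have hentangled : 1 / ((d : ℂ) + 1) * (1 / d) = 1 / (d * (d + 1)) := by field_simp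
  have hproduct : d / ((d : ℂ) + 1) * (1 / 4 ^ d) * (4 ^ d / d ^ 2) = 1 / (d * (d + 1)) := by
    field_simp
  have hdiag : (a = b ∧ a = c ∧ a = e) ↔ (a = b ∧ c = e) ∧ (a = c ∧ b = e) := by grind
  simp only [Matrix.add_apply, Matrix.smul_apply, smul_eq_mul, maxMixed_apply, psiProj_apply_s11,
    sum_rhoZ_apply, sum_kron_basisVec_apply, hdiag]
  push_cast
  simp only [mul_ite, mul_zero, mul_one, hmixed, hentangled, hproduct]
  rw [add_comm, ite_add_ite_eq_ite_or_add_ite_and]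

/-- explicit separable decomposition of the isotropic state at `λ = 1/(d+1)`. -/
theorem isotropic_explicit_decomposition {d : ℕ} (hd : 0 < d) :
    ((1 - 1 / ((d : ℝ) + 1) : ℝ) : ℂ) • maxMixed (d := d)
      + ((1 / ((d : ℝ) + 1) : ℝ) : ℂ) • psiProj (d := d)
    = (((d : ℝ) / ((d : ℝ) + 1) * (1 / 4 ^ d) : ℝ) : ℂ) • ∑ z : Fin d → Fin 4, rhoZ z
      + ((1 / ((d : ℝ) * ((d : ℝ) + 1)) : ℝ) : ℂ) •
          ∑ j : Fin d, kron (outer (basisVec j)) (outer (basisVec j)) :=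
  isotropic_explicit_decomposition_general
end
end

section
/- The isotropic state ρ(λ) = (1−λ) I_{AB} + λ|ψ⁺⟩⟨ψ⁺| with λ = 1/(d+1) is separable: it can be written as a convex combination of product states. -/
open Matrix Finset
open scoped ComplexOrder

noncomputable section

/-
Averaging the product states `ρ_z = |Φ_z⟩⟨Φ_z| ⊗ |Φ_{z*}⟩⟨Φ_{z*}|` over the `4^d` phase vectors
`z ∈ {±1, ±i}^d` is a twirl: the entry `⟨jm|ρ_z|kn⟩` is `z_j z̄_k z̄_m z_n / d²`, whose average is
`1` exactly when `{j, n} = {k, m}` as multisets and `0` otherwise. Hence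
`∑_z ρ_z = (4^d / d²) (1 + d |ψ⁺⟩⟨ψ⁺| - ∑_j |jj⟩⟨jj|)`, and adding back the missing diagonal
`∑_j |jj⟩⟨jj|` with weight `1/(d(d+1))` to the average with weight `d/(d+1)` yields
`(1 + d |ψ⁺⟩⟨ψ⁺|) / (d(d+1))`, the isotropic state at `λ = 1/(d+1)`.
-/

open Complex ComplexConjugate

theorem sum_fin_four_I_pow_mul_conj {a b : ℕ} (ha : a ≤ 2) (hb : b ≤ 2) :
    ∑ w : Fin 4, (I ^ (w : ℕ)) ^ a * conj ((I ^ (w : ℕ)) ^ b) = if a = b then 4 else 0 := by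
  interval_cases a <;> interval_cases b <;>
    simp [Fin.sum_univ_four, pow_succ, Complex.ext_iff] <;> norm_num

theorem prod_pow_single_add_single {ι M : Type*} [Fintype ι] [DecidableEq ι] [CommMonoid M]
    (x : ι → M) (j n : ι) :
    ∏ t, x t ^ (Finsupp.single j 1 + Finsupp.single n 1 : ι →₀ ℕ) t = x j * x n := by
  simp only [Finsupp.add_apply, Finsupp.single_apply, pow_add, Finset.prod_mul_distrib,
    Finset.prod_pow_boole, Finset.mem_univ, if_true]

theorem sum_pi_fin_four_I_pow {ι : Type*} [Fintype ι] [DecidableEq ι] (j k m n : ι) :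
    ∑ z : ι → Fin 4, I ^ (z j : ℕ) * conj (I ^ (z k : ℕ)) * conj (I ^ (z m : ℕ)) * I ^ (z n : ℕ)
      = if (j = k ∧ m = n) ∨ (j = m ∧ k = n) then 4 ^ Fintype.card ι else 0 := by
  -- The summand is a product over sites `t` of `(z t)^(c₁ t) * conj (z t)^(c₂ t)`; a site
  -- contributes `4` or `0` according as `c₁ t = c₂ t`, and `c₁ = c₂` says `{j, n} = {k, m}`.
  set c₁ : ι →₀ ℕ := Finsupp.single j 1 + Finsupp.single n 1
  set c₂ : ι →₀ ℕ := Finsupp.single k 1 + Finsupp.single m 1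
  have hc : ∀ (c : ι →₀ ℕ) t, c = c₁ ∨ c = c₂ → c t ≤ 2 := by
    rintro c t (rfl | rfl) <;> simp only [c₁, c₂, Finsupp.add_apply, Finsupp.single_apply] <;>
      split_ifs <;> omega
  have h_factor : ∀ z : ι → Fin 4,
      I ^ (z j : ℕ) * conj (I ^ (z k : ℕ)) * conj (I ^ (z m : ℕ)) * I ^ (z n : ℕ)
        = ∏ t, (I ^ (z t : ℕ)) ^ c₁ t * conj ((I ^ (z t : ℕ)) ^ c₂ t) := by
    intro z
    rw [Finset.prod_mul_distrib, ← map_prod, prod_pow_single_add_single,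
      prod_pow_single_add_single, map_mul]
    ring
  have h_eq : c₁ = c₂ ↔ (j = k ∧ m = n) ∨ (j = m ∧ k = n) := by
    rw [Finsupp.single_add_single_eq_single_add_single one_ne_zero one_ne_zero]
    simp [eq_comm (a := n)]
  rw [Finset.sum_congr rfl fun z _ => h_factor z,
    ← Fintype.prod_sum fun t (w : Fin 4) => (I ^ (w : ℕ)) ^ c₁ t * conj ((I ^ (w : ℕ)) ^ c₂ t)]
  rw [Finset.prod_congr rfl fun t _ => sum_fin_four_I_pow_mul_conj (hc _ t (.inl rfl))
    (hc _ t (.inr rfl))]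
  simp_rw [Finset.prod_ite_zero, Finset.prod_const, Finset.card_univ,
    Finset.mem_univ, true_imp_iff, ← DFunLike.ext_iff, h_eq]

section

variable {d : ℕ}

theorem one_div_sqrt_sq : ((1 / Real.sqrt d : ℝ) : ℂ) ^ 2 = 1 / (d : ℂ) := by
  rw [← ofReal_pow, div_pow, Real.sq_sqrt d.cast_nonneg]
  push_cast
  ring

theorem rhoZ_apply_s14 (z : Fin d → Fin 4) (j m k n : Fin d) :
    rhoZ z (j, m) (k, n)
      = 1 / (d : ℂ) ^ 2 *
          (I ^ (z j : ℕ) * conj (I ^ (z k : ℕ)) * conj (I ^ (z m : ℕ)) * I ^ (z n : ℕ)) := by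
  have h : ((1 / Real.sqrt d : ℝ) : ℂ) ^ 4 = 1 / (d : ℂ) ^ 2 := by
    rw [show 4 = 2 * 2 from rfl, pow_mul', one_div_sqrt_sq, div_pow, one_pow]
  simp only [rhoZ, kron, kroneckerMap_apply, outer, vecMulVec_apply, Pi.star_apply,
    Function.comp_apply, phiVec, star_def, map_mul, conj_ofReal, conj_conj, ← h]
  ring

theorem psiProj_apply_s14 (j m k n : Fin d) :
    psiProj (j, m) (k, n) = if j = m ∧ k = n then 1 / (d : ℂ) else 0 := by
  simp only [psiProj, outer, psiPlus, vecMulVec_apply, Pi.star_apply, apply_ite star, star_zero,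
    star_def, conj_ofReal]
  rw [ite_zero_mul_ite_zero, ← sq, one_div_sqrt_sq]

theorem sum_kron_outer_basisVec_apply (j m k n : Fin d) :
    (∑ i, kron (outer (basisVec i)) (outer (basisVec i))) (j, m) (k, n)
      = if (j = k ∧ m = n) ∧ (j = m ∧ k = n) then 1 else 0 := by
  have h : ∀ i : Fin d, outer (basisVec i) = single i i 1 := by
    intro i
    ext a b
    simp only [outer, basisVec, single_apply, vecMulVec_apply, Pi.star_apply, apply_ite star,
      star_one, star_zero, mul_ite, mul_one, mul_zero]
    grind
  simp only [h, kron, single_kronecker_single, mul_one, Matrix.sum_apply, single_apply,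
    Prod.mk.injEq]
  rw [Finset.sum_eq_single j (fun c _ hc => if_neg (by tauto)) (by simp)]
  grind

theorem sum_rhoZ (hd : 0 < d) :
    ∑ z : Fin d → Fin 4, rhoZ z = ((4 : ℂ) ^ d / (d : ℂ) ^ 2) •
      (1 + (d : ℂ) • psiProj - ∑ i, kron (outer (basisVec i)) (outer (basisVec i))) := by
  have hd' : (d : ℂ) ≠ 0 := by exact_mod_cast hd.ne'
  ext ⟨j, m⟩ ⟨k, n⟩
  simp only [Matrix.smul_apply, Matrix.sub_apply, Matrix.add_apply, one_apply, psiProj_apply_s14,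
    sum_kron_outer_basisVec_apply, Prod.mk.injEq, smul_eq_mul]
  simp only [Matrix.sum_apply, rhoZ_apply_s14, ← Finset.mul_sum, sum_pi_fin_four_I_pow,
    Fintype.card_fin]
  split_ifs <;> simp_all [div_eq_inv_mul]

theorem star_phiVec_dotProduct_phiVec (hd : 0 < d) (z : Fin d → Fin 4) :
    star (phiVec z) ⬝ᵥ phiVec z = 1 := by
  have hd' : (d : ℂ) ≠ 0 := by exact_mod_cast hd.ne'
  have h : ∀ j, star (phiVec z j) * phiVec z j = 1 / (d : ℂ) := by
    intro j
    simp only [phiVec, star_def, map_mul, conj_ofReal]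
    rw [mul_mul_mul_comm, conj_mul', norm_pow, norm_I, one_pow, ofReal_one, one_pow, mul_one,
      ← sq, one_div_sqrt_sq]
  simp only [dotProduct, Pi.star_apply, h, Finset.sum_const, Finset.card_univ, Fintype.card_fin,
    nsmul_eq_mul]
  field_simp

theorem star_basisVec_dotProduct_basisVec (j : Fin d) : star (basisVec j) ⬝ᵥ basisVec j = 1 := by
  simp [dotProduct, basisVec, apply_ite]

end

def IsSeparableDecomposition {ι : Type*} [Fintype ι] {d : ℕ}
    (ρ : Matrix (Fin d × Fin d) (Fin d × Fin d) ℂ) (p : ι → ℝ) (a b : ι → Fin d → ℂ) : Prop :=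
  (∀ i, 0 ≤ p i) ∧ (∑ i, p i = 1) ∧ (∀ i, star (a i) ⬝ᵥ a i = 1) ∧
    (∀ i, star (b i) ⬝ᵥ b i = 1) ∧ ρ = ∑ i, (p i : ℂ) • kron (outer (a i)) (outer (b i))

theorem IsSeparableDecomposition.exists_fin {ι : Type*} [Fintype ι] {d : ℕ}
    {ρ : Matrix (Fin d × Fin d) (Fin d × Fin d) ℂ} {p : ι → ℝ} {a b : ι → Fin d → ℂ}
    (h : IsSeparableDecomposition ρ p a b) :
    ∃ (n : ℕ) (p : Fin n → ℝ) (a b : Fin n → Fin d → ℂ), IsSeparableDecomposition ρ p a b := by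
  obtain ⟨hp, hsum, ha, hb, hρ⟩ := h
  let e := (Fintype.equivFin ι).symm
  refine ⟨_, p ∘ e, a ∘ e, b ∘ e, fun i => hp (e i), ?_, fun i => ha (e i), fun i => hb (e i), ?_⟩
  · rwa [Function.comp_def, e.sum_comp p]
  · rw [hρ]
    exact (e.sum_comp fun i => (p i : ℂ) • kron (outer (a i)) (outer (b i))).symm

theorem isSeparableDecomposition_isotropic {d : ℕ} (hd : 0 < d) :
    IsSeparableDecomposition
      (((1 - 1 / ((d : ℝ) + 1) : ℝ) : ℂ) • maxMixed (d := d)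
        + ((1 / ((d : ℝ) + 1) : ℝ) : ℂ) • psiProj (d := d))
      (Sum.elim (fun _ : Fin d → Fin 4 => (d / (d + 1) : ℝ) / 4 ^ d)
        (fun _ : Fin d => 1 / ((d : ℝ) * (d + 1))))
      (Sum.elim phiVec basisVec) (Sum.elim (fun z => star ∘ phiVec z) basisVec) := by
  refine ⟨?_, ?_, ?_, ?_, ?_⟩
  · simp only [Sum.forall, Sum.elim_inl, Sum.elim_inr]
    exact ⟨fun _ => by positivity, fun _ => by positivity⟩
  · simp only [Fintype.sum_sum_type, Sum.elim_inl, Sum.elim_inr, Finset.sum_const,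
      Finset.card_univ, Fintype.card_fun, Fintype.card_fin, nsmul_eq_mul]
    have : (d : ℝ) ≠ 0 := by exact_mod_cast hd.ne'
    push_cast
    field_simp
  · simp only [Sum.forall, Sum.elim_inl, Sum.elim_inr]
    exact ⟨star_phiVec_dotProduct_phiVec hd, star_basisVec_dotProduct_basisVec⟩
  · simp only [Sum.forall, Sum.elim_inl, Sum.elim_inr]
    refine ⟨fun z => ?_, star_basisVec_dotProduct_basisVec⟩
    rw [Function.comp_def, ← Pi.star_def, star_star, dotProduct_comm]
    exact star_phiVec_dotProduct_phiVec hd z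
  · simp only [Fintype.sum_sum_type, Sum.elim_inl, Sum.elim_inr, ← Finset.smul_sum]
    change _ = _ • ∑ z, rhoZ z + _
    have : (d : ℂ) ≠ 0 := by exact_mod_cast hd.ne'
    rw [sum_rhoZ hd, maxMixed]
    push_cast
    match_scalars <;> field_simp <;> ring

/-- the isotropic state at `λ = 1/(d+1)` is separable. -/
theorem isotropic_separable {d : ℕ} (hd : 0 < d) :
    ∃ (n : ℕ) (p : Fin n → ℝ) (a b : Fin n → Fin d → ℂ),
      (∀ i, 0 ≤ p i) ∧ (∑ i, p i = 1) ∧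
      (∀ i, star (a i) ⬝ᵥ a i = 1) ∧ (∀ i, star (b i) ⬝ᵥ b i = 1) ∧
      ((1 - 1 / ((d : ℝ) + 1) : ℝ) : ℂ) • maxMixed (d := d)
          + ((1 / ((d : ℝ) + 1) : ℝ) : ℂ) • psiProj (d := d)
        = ∑ i, (p i : ℂ) • kron (outer (a i)) (outer (b i)) :=
  (isSeparableDecomposition_isotropic hd).exists_fin
end
end

section
/- Let σ be a state on C^d ⊗ C^d with Tr_A[σ] = I_B (the maximally mixed state on the B factor). If σ − (d/(d+1)) I_{AB} is positive semidefinite, then σ is separable. -/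
open Matrix Finset
open scoped ComplexOrder

noncomputable section

/-- Partial trace over the first tensor factor. -/
def trA {d : ℕ} (ρ : Matrix (Fin d × Fin d) (Fin d × Fin d) ℂ) :
    Matrix (Fin d) (Fin d) ℂ :=
  fun r s => ∑ m : Fin d, ρ (m, r) (m, s)

/-- Separability: a convex combination of product states. -/
def Separable {d : ℕ} (σ : Matrix (Fin d × Fin d) (Fin d × Fin d) ℂ) : Prop :=
  ∃ (n : ℕ) (p : Fin n → ℝ) (A B : Fin n → Matrix (Fin d) (Fin d) ℂ),
    (∀ i, 0 ≤ p i) ∧ (∑ i, p i = 1) ∧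
    (∀ i, (A i).PosSemidef ∧ (A i).trace = 1) ∧
    (∀ i, (B i).PosSemidef ∧ (B i).trace = 1) ∧
    σ = ∑ i, (p i : ℂ) • kron (A i) (B i)

/-!
Put `c = 1 / (d (d + 1))` and `τ = σ - c • 1 ⪰ 0`. From `Tr_A σ = 1 / d` one gets `Tr_A τ = c • 1`,
so `σ = τ + 1 ⊗ Tr_A τ`, and this operator is separable for every `τ ⪰ 0`. Indeed, the average of
the product operators `|χ⟩⟨χ| ⊗ (⟨χ| ⊗ 1) τ (|χ⟩ ⊗ 1)` over all vectors `χ` of cube roots of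
unity is `τ + 1 ⊗ Tr_A τ - D τ`, because the average of `χ_i χ̄_j χ̄_m χ_n` is the indicator of
`{i, n} = {j, m}`; and the dephasing `D τ = ∑ₜ |t⟩⟨t| ⊗ (⟨t| ⊗ 1) τ (|t⟩ ⊗ 1)` is a sum of product
operators as well.
-/

section PartialInner
variable {ι κ : Type*} [Fintype ι] [Fintype κ] [DecidableEq κ]

def ketKronOne (u : ι → ℂ) : Matrix (ι × κ) κ ℂ :=
  Matrix.of fun p s => u p.1 * (1 : Matrix κ κ ℂ) p.2 s

def partialInner (u : ι → ℂ) (τ : Matrix (ι × κ) (ι × κ) ℂ) : Matrix κ κ ℂ :=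
  (ketKronOne u : Matrix (ι × κ) κ ℂ)ᴴ * τ * (ketKronOne u : Matrix (ι × κ) κ ℂ)

lemma partialInner_apply (u : ι → ℂ) (τ : Matrix (ι × κ) (ι × κ) ℂ) (r s : κ) :
    partialInner u τ r s = ∑ m, ∑ n, star (u m) * u n * τ (m, r) (n, s) := by
  simp only [partialInner, ketKronOne, Matrix.mul_apply, conjTranspose_apply, of_apply,
    Matrix.one_apply, mul_ite, mul_one, mul_zero, RCLike.star_def, apply_ite (starRingEnd ℂ),
    map_zero, ite_mul, zero_mul, Fintype.sum_prod_type, Finset.sum_ite_eq', Finset.mem_univ,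
    if_true, Finset.sum_mul]
  rw [Finset.sum_comm]
  simp only [mul_right_comm]

lemma Matrix.PosSemidef.partialInner {τ : Matrix (ι × κ) (ι × κ) ℂ} (hτ : τ.PosSemidef)
    (u : ι → ℂ) : (partialInner u τ).PosSemidef :=
  hτ.conjTranspose_mul_mul_same _

end PartialInner

lemma Matrix.PosSemidef.exists_eq_trace_smul {n : Type*} [Fintype n] [DecidableEq n] [Nonempty n]
    {M : Matrix n n ℂ} (hM : M.PosSemidef) :
    ∃ N : Matrix n n ℂ, (N.PosSemidef ∧ N.trace = 1) ∧ M = M.trace • N := by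
  by_cases h : M.trace = 0
  · obtain ⟨k⟩ := ‹Nonempty n›
    refine ⟨outer (Pi.single k 1), ⟨posSemidef_vecMulVec_self_star _, ?_⟩, ?_⟩
    · simp [outer, Matrix.trace, Matrix.vecMulVec_apply, Pi.single_apply]
    · rw [h, zero_smul]; exact hM.trace_eq_zero_iff.mp h
  · refine ⟨M.trace⁻¹ • M, ⟨hM.smul (inv_nonneg.mpr hM.trace_nonneg), ?_⟩, ?_⟩
    · rw [Matrix.trace_smul, smul_eq_mul, inv_mul_cancel₀ h]
    · rw [smul_smul, mul_inv_cancel₀ h, one_smul]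

lemma separable_sum_kron {d : ℕ} {ι : Type*} [Fintype ι] (A B : ι → Matrix (Fin d) (Fin d) ℂ)
    (hA : ∀ i, (A i).PosSemidef) (hB : ∀ i, (B i).PosSemidef)
    (htr : (∑ i, kron (A i) (B i)).trace = 1) : Separable (∑ i, kron (A i) (B i)) := by
  have : Nonempty (Fin d) := by
    rw [← Fin.pos_iff_nonempty, Nat.pos_iff_ne_zero]
    rintro rfl
    simp [Matrix.trace] at htr
  choose A' hA' hAeq using fun i => (hA i).exists_eq_trace_smul
  choose B' hB' hBeq using fun i => (hB i).exists_eq_trace_smul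
  set w : ι → ℂ := fun i => (A i).trace * (B i).trace with hw_def
  have hw : ∀ i, 0 ≤ w i := fun i => mul_nonneg (hA i).trace_nonneg (hB i).trace_nonneg
  have hterm : ∀ i, kron (A i) (B i) = ((w i).re : ℂ) • kron (A' i) (B' i) := by
    intro i
    rw [← Complex.eq_re_of_ofReal_le (hw i)]
    conv_lhs => rw [hAeq i, hBeq i]
    simp only [kron, smul_kronecker, kronecker_smul, smul_smul, hw_def, mul_comm]
  have hsum : ∑ i, w i = 1 := by
    rw [← htr, Matrix.trace_sum]
    exact Finset.sum_congr rfl fun i _ => (Matrix.trace_kronecker _ _).symm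
  let e := (Fintype.equivFin ι).symm
  refine ⟨Fintype.card ι, fun k => (w (e k)).re, fun k => A' (e k), fun k => B' (e k),
    fun k => (Complex.nonneg_iff.mp (hw _)).1, ?_, fun k => hA' _, fun k => hB' _, ?_⟩
  · rw [e.sum_comp (fun i => (w i).re), ← Complex.re_sum, hsum, Complex.one_re]
  · rw [e.sum_comp (fun i => ((w i).re : ℂ) • kron (A' i) (B' i))]
    exact Finset.sum_congr rfl fun i _ => hterm i

-- `2 ≠ 0` rules out the extra pairing `i = n ∧ j = m` that `±1` phases would allow.
lemma forall_add_sub_sub_eq_zero_iff {ι : Type*} [DecidableEq ι] {N : ℕ}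
    (hN : (2 : ZMod N) ≠ 0) (i j m n : ι) :
    (∀ a : ι → ZMod N, a i + a n - a j - a m = 0) ↔ s(i, n) = s(j, m) := by
  rw [Sym2.eq_iff]
  constructor
  · intro h
    have h1 : (1 : ZMod N) ≠ 0 := fun h => hN (by rw [← one_add_one_eq_two, h, add_zero])
    have key := Pi.single_add_single_eq_single_add_single (k := i) (l := n) (m := j) (n := m) h1 h1
    rw [one_add_one_eq_two] at key
    simpa only [true_and, hN, false_and, or_false] using key.mp <| funext fun k => by
      have hk := h (Pi.single k 1)
      simp only [Pi.add_apply, Pi.single_comm k] at hk ⊢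
      linear_combination hk
  · rintro (⟨rfl, rfl⟩ | ⟨rfl, rfl⟩) a <;> abel

lemma sum_stdAddChar_pairing {ι : Type*} [Fintype ι] [DecidableEq ι] {N : ℕ} [NeZero N]
    (hN : (2 : ZMod N) ≠ 0) (i j m n : ι) :
    ∑ a : ι → ZMod N, ZMod.stdAddChar (a i) * star (ZMod.stdAddChar (a j)) *
        star (ZMod.stdAddChar (a m)) * ZMod.stdAddChar (a n) =
      if s(i, n) = s(j, m) then (N : ℂ) ^ Fintype.card ι else 0 := by
  let L : (ι → ZMod N) →+ ZMod N :=
    Pi.evalAddMonoidHom (fun _ : ι => ZMod N) i + Pi.evalAddMonoidHom (fun _ : ι => ZMod N) n -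
      Pi.evalAddMonoidHom (fun _ : ι => ZMod N) j - Pi.evalAddMonoidHom (fun _ : ι => ZMod N) m
  have hL : ∀ a, L a = a i + a n - a j - a m := fun a => rfl
  have hterm : ∀ a : ι → ZMod N, ZMod.stdAddChar (a i) * star (ZMod.stdAddChar (a j)) *
      star (ZMod.stdAddChar (a m)) * ZMod.stdAddChar (a n) =
      ZMod.stdAddChar.compAddMonoidHom L a := by
    intro a
    rw [AddChar.compAddMonoidHom_apply, hL, ← starRingEnd_apply, ← starRingEnd_apply,
      ← AddChar.map_neg_eq_conj, ← AddChar.map_neg_eq_conj,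
      ← AddChar.map_add_eq_mul, ← AddChar.map_add_eq_mul, ← AddChar.map_add_eq_mul]
    congr 1; abel
  have hzero : ZMod.stdAddChar.compAddMonoidHom L = 0 ↔ s(i, n) = s(j, m) := by
    rw [AddChar.eq_zero_iff, ← forall_add_sub_sub_eq_zero_iff hN]
    refine forall_congr' fun a => ?_
    rw [AddChar.compAddMonoidHom_apply, hL, ← AddChar.map_zero_eq_one (ZMod.stdAddChar (N := N)),
      ZMod.injective_stdAddChar.eq_iff]
  classical
  simp_rw [hterm, AddChar.sum_eq_ite, hzero]
  simp [ZMod.card]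

lemma sum_smul_outer_mul_partialInner_stdAddChar {ι κ : Type*} [Fintype ι] [DecidableEq ι]
    [Fintype κ] [DecidableEq κ] {N : ℕ} [NeZero N] (hN : (2 : ZMod N) ≠ 0)
    (τ : Matrix (ι × κ) (ι × κ) ℂ) (i j : ι) (r s : κ) :
    ∑ a : ι → ZMod N, (((N : ℂ) ^ Fintype.card ι)⁻¹ • outer (ZMod.stdAddChar ∘ a)) i j *
        partialInner (ZMod.stdAddChar ∘ a) τ r s =
      ∑ m, ∑ n, if s(i, n) = s(j, m) then τ (m, r) (n, s) else 0 := by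
  simp only [partialInner_apply, Finset.mul_sum]
  rw [Finset.sum_comm]
  refine Finset.sum_congr rfl fun m _ => ?_
  rw [Finset.sum_comm]
  refine Finset.sum_congr rfl fun n _ => ?_
  simp only [Matrix.smul_apply, outer, vecMulVec_apply, Pi.star_apply, Function.comp_apply,
    smul_eq_mul]
  calc _ = ((N : ℂ) ^ Fintype.card ι)⁻¹ * (∑ a : ι → ZMod N, ZMod.stdAddChar (a i) *
        star (ZMod.stdAddChar (a j)) * star (ZMod.stdAddChar (a m)) * ZMod.stdAddChar (a n)) *
        τ (m, r) (n, s) := by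
        rw [Finset.mul_sum, Finset.sum_mul]
        exact Finset.sum_congr rfl fun a _ => by ring
    _ = _ := by
        rw [sum_stdAddChar_pairing hN]
        split_ifs <;> simp [NeZero.ne]

lemma add_kron_one_trA_eq_sum {d N : ℕ} [NeZero N] (hN : (2 : ZMod N) ≠ 0)
    (τ : Matrix (Fin d × Fin d) (Fin d × Fin d) ℂ) :
    τ + kron 1 (trA τ) =
      ∑ a : Fin d → ZMod N, kron (((N : ℂ) ^ d)⁻¹ • outer (ZMod.stdAddChar ∘ a))
          (partialInner (ZMod.stdAddChar ∘ a) τ) +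
        ∑ t, kron (outer (Pi.single t 1)) (partialInner (Pi.single t 1) τ) := by
  ext ⟨i, r⟩ ⟨j, s⟩
  have hphase := sum_smul_outer_mul_partialInner_stdAddChar hN τ i j r s
  rw [Fintype.card_fin] at hphase
  simp_rw [Sym2.eq_iff] at hphase
  simp only [Matrix.add_apply, Matrix.sum_apply, kron, kroneckerMap_apply]
  rw [hphase]
  simp only [trA, one_apply, outer, vecMulVec_apply, Pi.star_apply, partialInner_apply]
  by_cases hij : i = j
  · have hpair : ∀ m n : Fin d, (i = j ∧ n = m) ∨ (i = m ∧ n = j) ↔ n = m := fun m n =>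
      ⟨by rintro (⟨-, h⟩ | ⟨rfl, rfl⟩); exacts [h, hij.symm], fun h => Or.inl ⟨hij, h⟩⟩
    simp_rw [hpair]
    subst hij
    simp [Pi.single_apply, Finset.sum_ite_eq, Finset.sum_ite_eq', add_comm]
  · have hpair : ∀ m n : Fin d, (i = j ∧ n = m) ∨ (i = m ∧ n = j) ↔ m = i ∧ n = j := fun m n => by
      simp [hij, eq_comm]
    simp_rw [hpair]
    simp [hij, Pi.single_apply, ite_and]

lemma separable_add_kron_one_trA {d : ℕ} {τ : Matrix (Fin d × Fin d) (Fin d × Fin d) ℂ}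
    (hτ : τ.PosSemidef) (htr : (τ + kron 1 (trA τ)).trace = 1) :
    Separable (τ + kron 1 (trA τ)) := by
  let u : (Fin d → ZMod 3) ⊕ Fin d → Fin d → ℂ :=
    Sum.elim (ZMod.stdAddChar ∘ ·) (Pi.single · 1)
  let A : (Fin d → ZMod 3) ⊕ Fin d → Matrix (Fin d) (Fin d) ℂ :=
    Sum.elim (fun a => ((3 : ℂ) ^ d)⁻¹ • outer (u (.inl a))) (fun t => outer (u (.inr t)))
  have hdecomp : τ + kron 1 (trA τ) = ∑ x, kron (A x) (partialInner (u x) τ) := by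
    rw [Fintype.sum_sum_type]
    exact add_kron_one_trA_eq_sum (by decide) τ
  have hA : ∀ x, (A x).PosSemidef := by
    rintro (a | t)
    · exact (posSemidef_vecMulVec_self_star _).smul (inv_nonneg.mpr (by positivity))
    · exact posSemidef_vecMulVec_self_star _
  rw [hdecomp] at htr ⊢
  exact separable_sum_kron _ _ hA (fun x => hτ.partialInner _) htr

theorem separable_of_sub_maxMixed_posSemidef_general {d : ℕ}
    (σ : Matrix (Fin d × Fin d) (Fin d × Fin d) ℂ)
    (htr : σ.trace = 1)
    (hred : trA σ = ((1 / (d : ℝ) : ℝ) : ℂ) • (1 : Matrix (Fin d) (Fin d) ℂ))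
    (hpos : (σ - (((d : ℝ) / ((d : ℝ) + 1) : ℝ) : ℂ) • maxMixed (d := d)).PosSemidef) :
    Separable σ := by
  have hd : (d : ℂ) ≠ 0 := Nat.cast_ne_zero.mpr <| by rintro rfl; simp [Matrix.trace] at htr
  set τ := σ - (((d : ℝ) / ((d : ℝ) + 1) : ℝ) : ℂ) • maxMixed (d := d)
  have hσ : σ = τ + kron 1 (trA τ) := by
    ext ⟨i, r⟩ ⟨j, s⟩
    have hred_rs := congrFun (congrFun hred r) s
    simp only [trA, Matrix.smul_apply, one_apply, smul_eq_mul] at hred_rs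
    simp only [τ, trA, maxMixed, kron, kroneckerMap_apply, Matrix.add_apply, Matrix.sub_apply,
      Matrix.smul_apply, one_apply, smul_eq_mul, Finset.sum_sub_distrib, hred_rs]
    simp only [Prod.mk.injEq, true_and]
    push_cast
    by_cases hij : i = j <;> by_cases hrs : r = s
    · simp only [hij, hrs, and_self, if_true, mul_one, one_mul, Finset.sum_const, Finset.card_univ,
        Fintype.card_fin, nsmul_eq_mul]
      field_simp
      ring
    all_goals simp [hij, hrs]
  rw [hσ] at htr ⊢
  exact separable_add_kron_one_trA hpos htr

/-- if `Tr_A σ = I_B` and `σ − (d/(d+1)) I_{AB} ⪰ 0` then `σ` is separable. -/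
theorem separable_of_sub_maxMixed_posSemidef {d : ℕ} (hd : 0 < d)
    (σ : Matrix (Fin d × Fin d) (Fin d × Fin d) ℂ)
    (hpsd : σ.PosSemidef) (htr : σ.trace = 1)
    (hred : trA σ = ((1 / (d : ℝ) : ℝ) : ℂ) • (1 : Matrix (Fin d) (Fin d) ℂ))
    (hpos : (σ - (((d : ℝ) / ((d : ℝ) + 1) : ℝ) : ℂ) • maxMixed (d := d)).PosSemidef) :
    Separable σ :=
  separable_of_sub_maxMixed_posSemidef_general σ htr hred hpos
end
end

section
/- If Λ_0 : M_d(C) → M_d(C) is a completely positive map such that (I ⊗ Λ_0)(|ψ⁺⟩⟨ψ⁺|) is a faithful state, then Λ_0 is an invertible linear map. -/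
open Matrix Finset
open scoped ComplexOrder

noncomputable section

/-- The action of `I_n ⊗ Λ` on an operator on `C^n ⊗ C^d`. -/
def applyRightGen {n d : ℕ} (Λ : Matrix (Fin d) (Fin d) ℂ →ₗ[ℂ] Matrix (Fin d) (Fin d) ℂ)
    (ρ : Matrix (Fin n × Fin d) (Fin n × Fin d) ℂ) :
    Matrix (Fin n × Fin d) (Fin n × Fin d) ℂ :=
  fun p q => ∑ r : Fin d, ∑ s : Fin d,
    ρ (p.1, r) (q.1, s) * Λ (Matrix.single r s 1) p.2 q.2

/-- Complete positivity: `I_n ⊗ Λ` is a positive map for every `n`. -/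
def CompletelyPositive {d : ℕ}
    (Λ : Matrix (Fin d) (Fin d) ℂ →ₗ[ℂ] Matrix (Fin d) (Fin d) ℂ) : Prop :=
  ∀ (n : ℕ) (ρ : Matrix (Fin n × Fin d) (Fin n × Fin d) ℂ),
    ρ.PosSemidef → (applyRightGen Λ ρ).PosSemidef


/-! Precomposition with `Λ₀` factors through `I ⊗ Λ₀`: `(I ⊗ Λ)((I ⊗ Λ₀)(ρ)) = (I ⊗ (Λ ∘ Λ₀))(ρ)`.
So faithfulness of the Choi state makes `Λ ↦ Λ ∘ Λ₀` injective. A linear map that can be cancelled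
on the right is surjective (otherwise a nonzero map vanishing on its range would be killed by the
precomposition), and a surjective endomorphism of the finite-dimensional space `M_d(ℂ)` is
bijective. -/

theorem LinearMap.apply_eq_sum_single {R M m n : Type*} [CommSemiring R] [AddCommMonoid M]
    [Module R M] [Fintype m] [Fintype n] [DecidableEq m] [DecidableEq n]
    (Λ : Matrix m n R →ₗ[R] M) (A : Matrix m n R) :
    Λ A = ∑ r, ∑ s, A r s • Λ (Matrix.single r s 1) := by
  conv_lhs => rw [Matrix.matrix_eq_sum_single A]
  simp only [map_sum, ← map_smul, Matrix.smul_single, smul_eq_mul, mul_one]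

theorem LinearMap.surjective_of_injective_comp_right {K V W : Type*} [Field K]
    [AddCommGroup V] [Module K V] [AddCommGroup W] [Module K W] (f : V →ₗ[K] W)
    (hf : Function.Injective fun g : W →ₗ[K] W => g ∘ₗ f) : Function.Surjective f := by
  by_contra hsurj
  obtain ⟨φ, hφ, hrange⟩ := (LinearMap.range f).exists_le_ker_of_lt_top
    (lt_top_iff_ne_top.2 (mt LinearMap.range_eq_top.1 hsurj))
  obtain ⟨w, hw⟩ := DFunLike.ne_iff.1 hφ
  have hφf : φ.smulRight w ∘ₗ f = 0 ∘ₗ f := by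
    ext v
    simp [LinearMap.mem_ker.1 (hrange ⟨v, rfl⟩)]
  have hφw := LinearMap.congr_fun (hf hφf) w
  simp only [LinearMap.smulRight_apply, LinearMap.zero_apply] at hφw
  exact smul_ne_zero hw (ne_of_apply_ne φ (by simpa using hw)) hφw

theorem applyRight_applyRight {d : ℕ}
    (Λ Λ₀ : Matrix (Fin d) (Fin d) ℂ →ₗ[ℂ] Matrix (Fin d) (Fin d) ℂ)
    (ρ : Matrix (Fin d × Fin d) (Fin d × Fin d) ℂ) :
    applyRight Λ (applyRight Λ₀ ρ) = applyRight (Λ ∘ₗ Λ₀) ρ := by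
  ext p q
  simp only [applyRight, LinearMap.comp_apply, Λ.apply_eq_sum_single (Λ₀ _), Matrix.sum_apply,
    Matrix.smul_apply, smul_eq_mul, Finset.sum_mul, Finset.mul_sum, mul_assoc]
  simp only [← Fintype.sum_prod_type']
  -- reindex the quadruple sum by `(r, s, a, b) ↦ (a, b, r, s)`
  exact Fintype.sum_equiv ((Equiv.prodAssoc _ _ _).symm.trans
    ((Equiv.prodComm _ _).trans (Equiv.prodAssoc _ _ _))) _ _ fun _ => rfl

theorem Faithful.injective_comp_right {d : ℕ}
    {Λ₀ : Matrix (Fin d) (Fin d) ℂ →ₗ[ℂ] Matrix (Fin d) (Fin d) ℂ}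
    {ρ : Matrix (Fin d × Fin d) (Fin d × Fin d) ℂ} (h : Faithful (applyRight Λ₀ ρ)) :
    Function.Injective fun Λ : Matrix (Fin d) (Fin d) ℂ →ₗ[ℂ] Matrix (Fin d) (Fin d) ℂ =>
      Λ ∘ₗ Λ₀ := by
  intro Λ Λ' hΛ
  apply h
  simp only [applyRight_applyRight]
  exact congrArg (applyRight · ρ) hΛ

theorem cp_map_invertible_of_choi_faithful_general {d : ℕ}
    (Λ₀ : Matrix (Fin d) (Fin d) ℂ →ₗ[ℂ] Matrix (Fin d) (Fin d) ℂ)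
    (hfaith : Faithful (applyRight Λ₀ (psiProj (d := d)))) :
    Function.Bijective Λ₀ := by
  have hsurj : Function.Surjective Λ₀ :=
    Λ₀.surjective_of_injective_comp_right hfaith.injective_comp_right
  exact ⟨LinearMap.injective_iff_surjective.2 hsurj, hsurj⟩

/-- if the Choi state of a CP map `Λ₀` is faithful, then `Λ₀` is invertible. -/
theorem cp_map_invertible_of_choi_faithful {d : ℕ}
    (Λ₀ : Matrix (Fin d) (Fin d) ℂ →ₗ[ℂ] Matrix (Fin d) (Fin d) ℂ)
    (hcp : CompletelyPositive Λ₀)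
    (hfaith : Faithful (applyRight Λ₀ (psiProj (d := d)))) :
    Function.Bijective Λ₀ :=
  cp_map_invertible_of_choi_faithful_general Λ₀ hfaith
end
end
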